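/- arXiv:1011.3882 — 2 statements merged into one kernel-verified Lean document; each statement's English description precedes it below -/
import Mathlib

section
/- Let T be a tree with a edges and let G be a connected graph with at least a+1 vertices that contains a clique of order a. Then T can be embedded in G. -/
/-!
Since `T` has `a + 1` vertices, for `a ≥ 1` it has a leaf `l` with neighbour `p`, and `T - l`
has exactly `a` vertices, so it embeds into the clique `K` whatever its shape. As `G` is
connected and has a vertex outside `K`, some edge `k w` leaves `K`; send `p` to `k` and `l`
to `w`.
-/

open Finset SimpleGraph

theorem SimpleGraph.Connected.exists_adj_mem_not_mem {W : Type*} {G : SimpleGraph W}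
    (hG : G.Connected) {S : Set W} {x y : W} (hx : x ∈ S) (hy : y ∉ S) :
    ∃ u v, u ∈ S ∧ v ∉ S ∧ G.Adj u v := by
  obtain ⟨d, -, hd, hd'⟩ := (hG.preconnected x y).some.exists_boundary_dart S hx hy
  exact ⟨_, _, hd, hd', d.adj⟩

theorem Function.Embedding.exists_apply_eq_of_card_le {α β : Type*} [Fintype α] [Fintype β]
    [DecidableEq β] (h : Fintype.card α ≤ Fintype.card β) (a : α) (b : β) :
    ∃ g : α ↪ β, g a = b := by
  obtain ⟨g⟩ := Function.Embedding.nonempty_of_card_le h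
  exact ⟨g.trans (Equiv.swap (g a) b).toEmbedding, by simp⟩

theorem exists_injective_apply_mem_of_ne {V W : Type*} [Fintype V] [DecidableEq V]
    [DecidableEq W] {l p : V} (hlp : l ≠ p) {K : Finset W} {k w : W} (hk : k ∈ K)
    (hw : w ∉ K) (hcard : Fintype.card V ≤ K.card + 1) :
    ∃ f : V → W, Function.Injective f ∧ f l = w ∧ f p = k ∧ ∀ v, v ≠ l → f v ∈ K := by
  have hcard' : Fintype.card {v // v ≠ l} ≤ Fintype.card K := by
    rw [Fintype.card_subtype_compl, Fintype.card_subtype_eq, Fintype.card_coe]; omega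
  obtain ⟨g, hg⟩ :=
    Function.Embedding.exists_apply_eq_of_card_le hcard' ⟨p, hlp.symm⟩ ⟨k, hk⟩
  let g' := g.trans (Function.Embedding.subtype (· ∈ K))
  have hwg : w ∉ Set.range g' := by
    rintro ⟨v, rfl⟩
    exact hw (g v).2
  let f := (Equiv.optionSubtypeNe l).symm.toEmbedding.trans (g'.optionElim w hwg)
  refine ⟨f, f.injective, by simp [f], ?_, fun v hv => ?_⟩
  · simp [f, g', Equiv.optionSubtypeNe_symm_of_ne hlp.symm, hg]
  · simp [f, g', Equiv.optionSubtypeNe_symm_of_ne hv]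

theorem map_adj_of_forall_adj_eq {V W : Type*} {T : SimpleGraph V} {G : SimpleGraph W}
    {f : V → W} (hf : Function.Injective f) {l p : V} (hl : ∀ v, T.Adj l v → v = p)
    {K : Set W} (hK : G.IsClique K) (hfK : ∀ v, v ≠ l → f v ∈ K) (hfl : G.Adj (f l) (f p))
    {u v : V} (huv : T.Adj u v) : G.Adj (f u) (f v) := by
  by_cases hu : u = l
  · subst hu
    rw [hl v huv]
    exact hfl
  by_cases hv : v = l
  · subst hv
    rw [hl u huv.symm]
    exact hfl.symm
  exact hK (hfK u hu) (hfK v hv) (hf.ne huv.ne)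

theorem exists_injective_map_adj_of_forall_adj_eq {V W : Type*} [Fintype V]
    {T : SimpleGraph V} {G : SimpleGraph W} {l p : V} (hlp : l ≠ p)
    (hl : ∀ v, T.Adj l v → v = p) {K : Finset W} (hK : G.IsClique (K : Set W)) {k w : W}
    (hk : k ∈ K) (hw : w ∉ K) (hkw : G.Adj k w) (hcard : Fintype.card V ≤ K.card + 1) :
    ∃ f : V → W, Function.Injective f ∧ ∀ u v, T.Adj u v → G.Adj (f u) (f v) := by
  classical
  obtain ⟨f, hf, hfl, hfp, hfK⟩ := exists_injective_apply_mem_of_ne hlp hk hw hcard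
  refine ⟨f, hf, fun u v huv => map_adj_of_forall_adj_eq hf hl hK hfK ?_ huv⟩
  rw [hfl, hfp]
  exact hkw.symm

/-- Lemma 4: any tree with `a` edges embeds into any connected graph with at
least `a + 1` vertices that contains a clique of order `a`. -/
theorem stmt_3 {V W : Type*} [Fintype V] [Fintype W]
    (T : SimpleGraph V) [DecidableRel T.Adj]
    (G : SimpleGraph W)
    (a : ℕ) (hT : T.IsTree) (hTd : T.edgeFinset.card = a)
    (hGconn : G.Connected) (hGcard : a + 1 ≤ Fintype.card W)
    (K : Finset W) (hK : G.IsNClique a K) :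
    ∃ f : V → W, Function.Injective f ∧
      ∀ u v : V, T.Adj u v → G.Adj (f u) (f v) := by
  classical
  have hV : Fintype.card V = a + 1 := by
    have := hT.card_edgeFinset
    omega
  rcases Nat.eq_zero_or_pos a with rfl | ha
  · have : Subsingleton V := Fintype.card_le_one_iff_subsingleton.mp hV.le
    obtain ⟨w⟩ : Nonempty W := Fintype.card_pos_iff.mp hGcard
    exact ⟨fun _ => w, Function.injective_of_subsingleton _,
      fun u v huv => (huv.ne (Subsingleton.elim u v)).elim⟩
  have : Nontrivial V := Fintype.one_lt_card_iff_nontrivial.mp (by omega)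
  obtain ⟨l, hl⟩ := hT.exists_vert_degree_one_of_nontrivial
  obtain ⟨p, hlp, hp⟩ := degree_eq_one_iff_existsUnique_adj.mp hl
  obtain ⟨k₀, hk₀⟩ : K.Nonempty := Finset.card_pos.mp (by rw [hK.card_eq]; exact ha)
  obtain ⟨w₀, hw₀⟩ : Kᶜ.Nonempty := Finset.card_pos.mp (by rw [card_compl, hK.card_eq]; omega)
  obtain ⟨k, w, hk, hw, hkw⟩ :=
    hGconn.exists_adj_mem_not_mem (S := (K : Set W)) hk₀ (by simpa using hw₀)
  exact exists_injective_map_adj_of_forall_adj_eq hlp.ne hp hK.isClique hk hw hkw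
    (by rw [hK.card_eq, hV])
end

section
/- Let F be a forest that is a disjoint union of p stars with a_1, ..., a_p ≥ 1 edges respectively, and d = Σ a_i. Then every graph G with at least d + p vertices and minimum degree at least d contains F as a subgraph. -/
/-!
Choose the `p` centres as a `p`-set `S` spanning as few edges as possible, and match every leaf
slot of star `i` to a neighbour of its centre outside `S` by Hall's theorem. Take a set of slots
whose stars are indexed by `I`, with centres `C`. If some centre in `C` has at most
`p - |I|` neighbours in `S`, its neighbours outside `S` already number at least
`d - p + |I| ≥ ∑_{i ∈ I} a_i`. Otherwise every vertex `u ∉ S` is adjacent to some centre in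
`C`: if not, exchanging a centre `v ∈ C` for `u` would replace the more than `p - |I|` edges
at `v` inside `S` by at most `p - |I|` edges at `u`, contradicting minimality. Then the
neighbourhoods cover the `n - p ≥ d` vertices outside `S`.
-/

open Finset Function

namespace SimpleGraph

variable {W : Type*} [Fintype W] [DecidableEq W] (G : SimpleGraph W) [DecidableRel G.Adj]

/-- Twice the number of edges of `G` inside `T`. -/
def inducedDegreeSum (T : Finset W) : ℕ :=
  ∑ x ∈ T, #(G.neighborFinset x ∩ T)

lemma inducedDegreeSum_insert {T : Finset W} {u : W} (hu : u ∉ T) :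
    G.inducedDegreeSum (insert u T) = 2 * #(G.neighborFinset u ∩ T) + G.inducedDegreeSum T := by
  have h_inter : ∀ x ∈ T, #(G.neighborFinset x ∩ insert u T)
      = #(G.neighborFinset x ∩ T) + if G.Adj x u then 1 else 0 := by
    intro x hx
    split_ifs with h
    · rw [inter_insert_of_mem (by simpa using h), card_insert_of_notMem (by simp [hu])]
    · rw [inter_insert_of_notMem (by simpa using h), Nat.add_zero]
  have h_count : (∑ x ∈ T, if G.Adj x u then 1 else 0) = #(G.neighborFinset u ∩ T) := by
    rw [← card_filter]
    congr 1
    ext x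
    simp [adj_comm, and_comm]
  unfold inducedDegreeSum
  rw [sum_insert hu, inter_insert_of_notMem (by simp), sum_congr rfl h_inter, sum_add_distrib,
    h_count]
  ring

lemma card_neighborFinset_inter_le_of_swap {S : Finset W} {u v : W} (hv : v ∈ S) (hu : u ∉ S)
    (hmin : G.inducedDegreeSum S ≤ G.inducedDegreeSum (insert u (S.erase v))) :
    #(G.neighborFinset v ∩ S) ≤ #(G.neighborFinset u ∩ S.erase v) := by
  have hS : G.inducedDegreeSum S
      = 2 * #(G.neighborFinset v ∩ S.erase v) + G.inducedDegreeSum (S.erase v) := by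
    conv_lhs => rw [← insert_erase hv]
    exact G.inducedDegreeSum_insert (notMem_erase v S)
  have hv_inter : G.neighborFinset v ∩ S.erase v = G.neighborFinset v ∩ S := by
    rw [inter_erase, erase_eq_of_notMem (by simp)]
  rw [G.inducedDegreeSum_insert fun h => hu (mem_of_mem_erase h)] at hmin
  rw [← hv_inter]
  omega

def IsSparsest (S : Finset W) : Prop :=
  ∀ T : Finset W, #T = #S → G.inducedDegreeSum S ≤ G.inducedDegreeSum T

lemma exists_isSparsest {k : ℕ} (hk : k ≤ Fintype.card W) :
    ∃ S : Finset W, #S = k ∧ G.IsSparsest S := by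
  obtain ⟨S, hS, hmin⟩ := exists_min_image (univ.powersetCard k) G.inducedDegreeSum
    (powersetCard_nonempty.mpr (by simpa using hk))
  have hSk : #S = k := (mem_powersetCard.mp hS).2
  exact ⟨S, hSk, fun T hT => hmin T (mem_powersetCard.mpr ⟨subset_univ T, hT.trans hSk⟩)⟩

variable {G}

lemma IsSparsest.exists_adj_of_dense {S C : Finset W} (hS : G.IsSparsest S) (hCS : C ⊆ S)
    (hC : C.Nonempty) (hdense : ∀ v ∈ C, #S < #(G.neighborFinset v ∩ S) + #C)
    {u : W} (hu : u ∉ S) : ∃ v ∈ C, G.Adj v u := by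
  by_contra! hnadj
  obtain ⟨v, hvC⟩ := hC
  have hvS := hCS hvC
  have hswap := G.card_neighborFinset_inter_le_of_swap hvS hu (hS _ (by
    rw [card_insert_of_notMem fun h => hu (mem_of_mem_erase h), card_erase_of_mem hvS]
    have := card_pos.mpr ⟨v, hvS⟩
    omega))
  have hsub : G.neighborFinset u ∩ S.erase v ⊆ S \ C := by
    intro x hx
    rw [mem_inter, mem_neighborFinset] at hx
    exact mem_sdiff.mpr ⟨mem_of_mem_erase hx.2, fun hxC => hnadj x hxC hx.1.symm⟩
  have := card_le_card hsub
  rw [card_sdiff_of_subset hCS] at this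
  have := hdense v hvC
  have := card_le_card hCS
  omega

lemma IsSparsest.le_card_biUnion_neighborFinset_sdiff {S C : Finset W} (hS : G.IsSparsest S)
    (hCS : C ⊆ S) (hC : C.Nonempty) {δ : ℕ} (hδ : ∀ w, δ ≤ G.degree w) :
    min (δ + #C - #S) (Fintype.card W - #S) ≤ #(C.biUnion fun v => G.neighborFinset v \ S) := by
  by_cases hsparse : ∃ v ∈ C, #(G.neighborFinset v ∩ S) + #C ≤ #S
  · obtain ⟨v, hvC, hv⟩ := hsparse
    have hsplit := card_sdiff_add_card_inter (G.neighborFinset v) S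
    rw [card_neighborFinset_eq_degree] at hsplit
    have := card_le_card (subset_biUnion_of_mem (fun v => G.neighborFinset v \ S) hvC)
    have := hδ v
    omega
  · push Not at hsparse
    have hcover : univ \ S ⊆ C.biUnion fun v => G.neighborFinset v \ S := by
      intro u hu
      have hu := (mem_sdiff.mp hu).2
      obtain ⟨v, hvC, hvu⟩ := hS.exists_adj_of_dense hCS hC hsparse hu
      exact mem_biUnion.mpr ⟨v, hvC, mem_sdiff.mpr ⟨(mem_neighborFinset G v u).mpr hvu, hu⟩⟩
    have := card_le_card hcover
    rw [card_sdiff_of_subset (subset_univ S), card_univ] at this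
    omega

end SimpleGraph

lemma Finset.card_le_sum_card_image_fst {ι : Type*} [DecidableEq ι] {β : ι → Type*}
    [∀ i, Fintype (β i)] (s : Finset (Σ i, β i)) :
    #s ≤ ∑ i ∈ s.image Sigma.fst, Fintype.card (β i) := by
  calc #s ≤ #((s.image Sigma.fst).sigma fun _ => univ) :=
        card_le_card fun x hx => mem_sigma.mpr ⟨mem_image_of_mem _ hx, mem_univ _⟩
    _ = ∑ i ∈ s.image Sigma.fst, Fintype.card (β i) := by simp [card_sigma]

lemma Finset.sum_add_card_compl_le_sum {ι : Type*} [Fintype ι] [DecidableEq ι] {a : ι → ℕ}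
    (ha : ∀ i, 1 ≤ a i) (I : Finset ι) : ∑ i ∈ I, a i + #Iᶜ ≤ ∑ i, a i := by
  rw [← sum_add_sum_compl I a, card_eq_sum_ones]
  exact Nat.add_le_add_left (sum_le_sum fun i _ => ha i) _

section StarForest

open SimpleGraph

variable {ι W : Type*} {a : ι → ℕ}

def starForestMap (c : ι → W) (g : (Σ i, Fin (a i)) → W) : (Σ i, Option (Fin (a i))) → W
  | ⟨i, none⟩ => c i
  | ⟨i, some j⟩ => g ⟨i, j⟩

lemma starForestMap_injective {c : ι → W} {g : (Σ i, Fin (a i)) → W} (hc : Injective c)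
    (hg : Injective g) (hcg : ∀ i x, c i ≠ g x) : Injective (starForestMap c g) := by
  rintro ⟨i, _ | j⟩ ⟨i', _ | j'⟩ h <;> simp only [starForestMap] at h
  · cases hc h; rfl
  · exact absurd h (hcg _ _)
  · exact absurd h.symm (hcg _ _)
  · cases hg h; rfl

variable [Fintype ι] [DecidableEq ι] [Fintype W] [DecidableEq W] {G : SimpleGraph W} [DecidableRel G.Adj]

theorem exists_injective_leaves_of_isSparsest (ha : ∀ i, 1 ≤ a i) {S : Finset W}
    (hS : G.IsSparsest S) (hSι : #S = Fintype.card ι) {c : ι → W} (hc : Injective c)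
    (hcS : ∀ i, c i ∈ S) (hcard : ∑ i, a i + Fintype.card ι ≤ Fintype.card W)
    (hG : ∀ w, ∑ i, a i ≤ G.degree w) :
    ∃ g : (Σ i, Fin (a i)) → W, Injective g ∧ ∀ x, g x ∉ S ∧ G.Adj (c x.1) (g x) := by
  let t : (Σ i, Fin (a i)) → Finset W := fun x => G.neighborFinset (c x.1) \ S
  have hall : ∀ s : Finset (Σ i, Fin (a i)), #s ≤ #(s.biUnion t) := by
    intro s
    obtain rfl | hs := s.eq_empty_or_nonempty
    · simp
    set I := s.image Sigma.fst
    have hbiUnion : s.biUnion t = (I.image c).biUnion fun v => G.neighborFinset v \ S := by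
      rw [image_image, image_biUnion]
      rfl
    have hbound := hS.le_card_biUnion_neighborFinset_sdiff
      (C := I.image c) (image_subset_iff.mpr fun i _ => hcS i) ((hs.image _).image _) hG
    have hsI : #s ≤ ∑ i ∈ I, a i := by simpa using s.card_le_sum_card_image_fst
    have hI := sum_add_card_compl_le_sum ha I
    rw [card_image_of_injective _ hc, hSι] at hbound
    rw [card_compl] at hI
    have := I.card_le_univ
    rw [hbiUnion]
    omega
  obtain ⟨g, hg, hgt⟩ := (all_card_le_biUnion_card_iff_exists_injective t).mp hall
  refine ⟨g, hg, fun x => ?_⟩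
  have hx := mem_sdiff.mp (hgt x)
  exact ⟨hx.2, (mem_neighborFinset G _ _).mp hx.1⟩

end StarForest

/-- A forest of `p` vertex-disjoint stars `K_{1, a i}` with `a i ≥ 1` and
`d = ∑ a i` embeds into any graph `G` with at least `d + p` vertices and
minimum degree at least `d`. The star with index `i` is modelled with centre
`⟨i, none⟩` and leaves `⟨i, some j⟩`. -/
theorem stmt_13 {p : ℕ} {W : Type*} [Fintype W]
    (G : SimpleGraph W) [DecidableRel G.Adj]
    (a : Fin p → ℕ) (d : ℕ)
    (ha : ∀ i, 1 ≤ a i) (hd : d = ∑ i, a i)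
    (hcard : d + p ≤ Fintype.card W)
    (hG : ∀ w : W, d ≤ G.degree w) :
    ∃ f : (Σ i : Fin p, Option (Fin (a i))) → W, Function.Injective f ∧
      ∀ (i : Fin p) (j : Fin (a i)), G.Adj (f ⟨i, none⟩) (f ⟨i, some j⟩) := by
  classical
  subst hd
  obtain ⟨S, hSp, hS⟩ := G.exists_isSparsest (k := p) (by omega)
  let c : Fin p → W := fun i => (S.equivFinOfCardEq hSp).symm i
  have hc : Injective c := Subtype.val_injective.comp (S.equivFinOfCardEq hSp).symm.injective
  have hcS : ∀ i, c i ∈ S := fun i => ((S.equivFinOfCardEq hSp).symm i).2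
  obtain ⟨g, hg, hgS⟩ := exists_injective_leaves_of_isSparsest ha hS
    (by rw [hSp, Fintype.card_fin]) hc hcS (by rwa [Fintype.card_fin]) hG
  refine ⟨starForestMap c g, starForestMap_injective hc hg fun i x h => ?_, fun i j => ?_⟩
  · exact (hgS x).1 (h ▸ hcS i)
  · exact (hgS ⟨i, j⟩).2
end
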